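/- arXiv:2504.14006 — 4 statements merged into one kernel-verified Lean document; each statement's English description precedes it below -/
import Mathlib

section
/- In the measure setting, let K be an intermediate field with E ⊆ K ⊆ L and K ∩ k_L = k, and let σ̄′ and σ̄″ be two lifts of ρ̄ to Gal(L/K). Then for every subset X ⊆ 𝒮(L/K), |{τ̄ ∈ Gal(L/K·k_L)^n : Fix(σ′_1τ_1,…,σ′_nτ_n) ∈ X}| = |{τ̄ ∈ Gal(L/K·k_L)^n : Fix(σ″_1τ_1,…,σ″_nτ_n) ∈ X}|. Consequently the measure μ¹_{L/K} does not depend on the choice of lift of ρ̄. -/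
/-! Two lifts of `ρ̄` agree on `k_L`, so `δᵢ = σ″ᵢ⁻¹σ′ᵢ` lies in `Gal(L/K·k_L)`. Since
`σ″ᵢ(δᵢτᵢ) = σ′ᵢτᵢ`, left multiplication by `δ̄` is a bijection between the two sets of
tuples `τ̄`. -/

open IntermediateField

section MeasureSetting

variable (k E L : Type) [Field k] [Field E] [Field L]
  [Algebra k E] [Algebra E L] [Algebra k L] [IsScalarTower k E L]

/-- `E` is regular over `k`: every element of `E` algebraic over `k` lies in `k`. -/
def IsRegularExtension (k E : Type*) [Field k] [Field E] [Algebra k E] : Prop :=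
  ∀ x : E, IsAlgebraic k x → x ∈ (algebraMap k E).range

/-- `𝒮(L/K)`: the set of intermediate fields `F` with `K ⊆ F ⊆ L` and `F ∩ k_L = k`,
where `k_L` is the relative separable closure of `k` in `L`. -/
def SS (K : IntermediateField E L) : Set (IntermediateField E L) :=
  {F | K ≤ F ∧ F.restrictScalars k ⊓ separableClosure k L = ⊥}

variable (n : ℕ)

/-- The automorphism `σ ∈ Gal(L/K)` restricts to `ρ ∈ Gal(k_L/k)` on `k_L`. -/
def RestrictsTo (K : IntermediateField E L) (σ : L ≃ₐ[K] L)
    (ρ : ↥(separableClosure k L) ≃ₐ[k] ↥(separableClosure k L)) : Prop :=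
  ∀ x : ↥(separableClosure k L), σ (x : L) = ((ρ x : L))

/-- `σ̄` is a lift of `ρ̄` to `Gal(L/K)`. -/
def IsLift (K : IntermediateField E L)
    (ρ : Fin n → (↥(separableClosure k L) ≃ₐ[k] ↥(separableClosure k L)))
    (σ : Fin n → (L ≃ₐ[K] L)) : Prop :=
  ∀ i, RestrictsTo k E L K (σ i) (ρ i)

/-- The fixed field in `L` of the subgroup generated by `σ₁, …, σₙ ∈ Gal(L/K)`,
viewed as an intermediate field of `L/E`. -/
def FixT (K : IntermediateField E L) (σ : Fin n → (L ≃ₐ[K] L)) : IntermediateField E L :=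
  (IntermediateField.fixedField (Subgroup.closure (Set.range σ))).restrictScalars E

/-- The compositum `K·k_L`, as an intermediate field of `L/K`. -/
def compKL (K : IntermediateField E L) : IntermediateField K L :=
  IntermediateField.adjoin K ((separableClosure k L : IntermediateField k L) : Set L)

/-- `μ¹_{L/K}(X)` computed from a chosen lift `σ'` of `ρ̄`:
`|{τ̄ ∈ Gal(L/K·k_L)ⁿ : Fix(σ'₁τ₁,…,σ'ₙτₙ) ∈ X}| / [L : K·k_L]ⁿ`, where
`Gal(L/K·k_L)` is the subgroup of `Gal(L/K)` fixing `k_L` (equivalently `K·k_L`)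
pointwise. -/
noncomputable def mu1Lift (K : IntermediateField E L) (σ' : Fin n → (L ≃ₐ[K] L))
    (X : Set (IntermediateField E L)) : ℚ :=
  (Nat.card {τ : Fin n → ↥((compKL k E L K).fixingSubgroup) //
      FixT E L n K (fun i => σ' i * ((τ i : L ≃ₐ[K] L))) ∈ X} : ℚ) /
    ((Module.finrank ↥(compKL k E L K) L : ℚ)) ^ n

/-- `μ¹_{L/K}(X)`, in lift-free form: the set of tuples `σ̄'τ̄` with `σ̄'` a fixed lift of
`ρ̄` and `τ̄ ∈ Gal(L/K·k_L)ⁿ` is exactly the set of tuples `ᾱ ∈ Gal(L/K)ⁿ` lifting `ρ̄`,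
so `μ¹_{L/K}(X) = |{ᾱ ∈ Gal(L/K)ⁿ : ᾱ lifts ρ̄ and Fix(ᾱ) ∈ X}| / [L : K·k_L]ⁿ`. -/
noncomputable def mu1 (ρ : Fin n → (↥(separableClosure k L) ≃ₐ[k] ↥(separableClosure k L)))
    (K : IntermediateField E L) (X : Set (IntermediateField E L)) : ℚ :=
  (Nat.card {α : Fin n → (L ≃ₐ[K] L) //
      IsLift k E L n K ρ α ∧ FixT E L n K α ∈ X} : ℚ) /
    ((Module.finrank ↥(compKL k E L K) L : ℚ)) ^ n

/-- The iterated measures `μⁱ_{L/K}` on singletons: `μ⁰_{L/K}` is the point mass at `K`,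
and `μ^{i+1}_{L/K}({F}) = Σ_{F' ∈ 𝒮(L/K)} μⁱ_{L/K}({F'})·μ¹_{L/F'}({F})`. -/
noncomputable def muI (ρ : Fin n → (↥(separableClosure k L) ≃ₐ[k] ↥(separableClosure k L)))
    (K : IntermediateField E L) : ℕ → IntermediateField E L → ℚ
  | 0, F => ({K} : Set (IntermediateField E L)).indicator 1 F
  | (i+1), F => ∑ᶠ F' ∈ SS k E L K, muI ρ K i F' * mu1 k E L n ρ F' {F}

end MeasureSetting

theorem IntermediateField.mem_fixingSubgroup_adjoin_iff {F M : Type*} [Field F] [Field M]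
    [Algebra F M] {S : Set M} {σ : M ≃ₐ[F] M} :
    σ ∈ (adjoin F S).fixingSubgroup ↔ ∀ x ∈ S, σ x = x := by
  refine ⟨fun h x hx => h ⟨x, subset_adjoin F S hx⟩, fun h ⟨x, hx⟩ => ?_⟩
  have hext := adjoin_algHom_ext F (φ₁ := (σ : M →ₐ[F] M).comp (adjoin F S).val)
    (φ₂ := (adjoin F S).val) h
  exact DFunLike.congr_fun hext ⟨x, hx⟩

theorem Subgroup.card_subtype_mul_eq_of_inv_mul_mem {G ι : Type*} [Group G] (H : Subgroup G)
    {a b : ι → G} (hab : ∀ i, (b i)⁻¹ * a i ∈ H) (P : (ι → G) → Prop) :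
    Nat.card {τ : ι → H // P fun i => a i * τ i} =
      Nat.card {τ : ι → H // P fun i => b i * τ i} :=
  Nat.card_congr <|
    (Equiv.piCongrRight fun i => Equiv.mulLeft (⟨(b i)⁻¹ * a i, hab i⟩ : H)).subtypeEquiv
      fun τ => by simp [mul_assoc]

theorem RestrictsTo.inv_mul_mem_fixingSubgroup_compKL
    {k E L : Type} [Field k] [Field E] [Field L]
    [Algebra k E] [Algebra E L] [Algebra k L] [IsScalarTower k E L]
    {K : IntermediateField E L} {f g : L ≃ₐ[K] L}
    {ρ : ↥(separableClosure k L) ≃ₐ[k] ↥(separableClosure k L)}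
    (hf : RestrictsTo k E L K f ρ) (hg : RestrictsTo k E L K g ρ) :
    g⁻¹ * f ∈ (compKL k E L K).fixingSubgroup :=
  mem_fixingSubgroup_adjoin_iff.2 fun x hx => by
    rw [AlgEquiv.mul_apply, hf ⟨x, hx⟩, ← hg ⟨x, hx⟩]
    exact g.symm_apply_apply x

theorem statement4_general
    (k E L : Type) [Field k] [Field E] [Field L]
    [Algebra k E] [Algebra E L] [Algebra k L] [IsScalarTower k E L]
    (n : ℕ)
    (ρ : Fin n → (↥(separableClosure k L) ≃ₐ[k] ↥(separableClosure k L)))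
    (K : IntermediateField E L)
    (σ' σ'' : Fin n → (L ≃ₐ[K] L))
    (hσ' : IsLift k E L n K ρ σ') (hσ'' : IsLift k E L n K ρ σ'')
    (X : Set (IntermediateField E L)) :
    Nat.card {τ : Fin n → ↥((compKL k E L K).fixingSubgroup) //
        FixT E L n K (fun i => σ' i * ((τ i : L ≃ₐ[K] L))) ∈ X} =
      Nat.card {τ : Fin n → ↥((compKL k E L K).fixingSubgroup) //
        FixT E L n K (fun i => σ'' i * ((τ i : L ≃ₐ[K] L))) ∈ X} ∧
    mu1Lift k E L n K σ' X = mu1Lift k E L n K σ'' X := by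
  have hcard := Subgroup.card_subtype_mul_eq_of_inv_mul_mem _
    (fun i => (hσ' i).inv_mul_mem_fixingSubgroup_compKL (hσ'' i)) (FixT E L n K · ∈ X)
  exact ⟨hcard, by rw [mu1Lift, mu1Lift, hcard]⟩

/-- the measure `μ¹_{L/K}` does not depend on the choice of the lift of `ρ̄`
to `Gal(L/K)`: for two lifts `σ̄'`, `σ̄''` and any `X ⊆ 𝒮(L/K)`, the corresponding counts
of tuples `τ̄ ∈ Gal(L/K·k_L)ⁿ` agree, and hence the measures agree. -/
theorem statement4
    (k E L : Type) [Field k] [Field E] [Field L] [PerfectField k]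
    [Algebra k E] [Algebra E L] [Algebra k L] [IsScalarTower k E L]
    (hreg : IsRegularExtension k E)
    [FiniteDimensional E L] [IsGalois E L]
    [IsGalois k (separableClosure k L)]
    (n : ℕ) (hn : 1 ≤ n)
    (ρ : Fin n → (↥(separableClosure k L) ≃ₐ[k] ↥(separableClosure k L)))
    (hgen : Subgroup.closure (Set.range ρ) = ⊤)
    (K : IntermediateField E L)
    (hK : K.restrictScalars k ⊓ separableClosure k L = ⊥)
    (σ' σ'' : Fin n → (L ≃ₐ[K] L))
    (hσ' : IsLift k E L n K ρ σ') (hσ'' : IsLift k E L n K ρ σ'')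
    (X : Set (IntermediateField E L)) (hX : X ⊆ SS k E L K) :
    Nat.card {τ : Fin n → ↥((compKL k E L K).fixingSubgroup) //
        FixT E L n K (fun i => σ' i * ((τ i : L ≃ₐ[K] L))) ∈ X} =
      Nat.card {τ : Fin n → ↥((compKL k E L K).fixingSubgroup) //
        FixT E L n K (fun i => σ'' i * ((τ i : L ≃ₐ[K] L))) ∈ X} ∧
    mu1Lift k E L n K σ' X = mu1Lift k E L n K σ'' X :=
  statement4_general k E L n ρ K σ' σ'' hσ' hσ'' X
end

section
/- In the measure setting, let K be an intermediate field with E ⊆ K ⊆ L and K ∩ k_L = k, and let σ̄′ be a lift of ρ̄ to Gal(L/K). Suppose k₁ ⊆ L is a finite Galois extension of k such that for every intermediate field F with K ⊆ F ⊆ L one has F ∩ k_L = k if and only if F ∩ k₁ = k (so 𝒮(L/K) = {F : K ⊆ F ⊆ L, F ∩ k₁ = k}). Then μ¹_{L/K} computed with respect to k₁ or to k_L gives the same result: for every F ∈ 𝒮(L/K), |{τ̄ ∈ Gal(L/K·k_L)^n : Fix(σ′_1τ_1,…,σ′_nτ_n) = F}| / [L : K·k_L]^n = |{τ̄ ∈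 Gal(L/K·k₁)^n : Fix(σ′_1τ_1,…,σ′_nτ_n) = F}| / [L : K·k₁]^n. -/
open IntermediateField

/-!
Put `G = Gal(L/K)`, `N = Gal(L/K·k_L)` and `N₁ = Gal(L/K·k₁)`. Both are normal in `G`, as kernels
of the restrictions to the normal extensions `k_L/k` and `k₁/k`, and `N ≤ N₁` since `k₁ ⊆ k_L`.

For `P` normal in `G` and `D ≤ G`, the `τ̄ ∈ Pⁿ` with all `σ'ᵢτᵢ ∈ D` are counted coordinatewise:
there are `|D ∩ P|ⁿ` of them if every `σ'ᵢ` lies in `DP` and none otherwise, and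
`|D ∩ P| / |P| = 1 / [G : D]` when `DP = G`. If all `σ'ᵢ` lie in `DN₁`, an element of `k₁` fixed
by `D` is fixed by every `σ'ᵢ`, hence by the generators `ρ̄` of `Gal(k_L/k)`, so it lies in `k`;
the hypothesis on `k₁` then gives `Fix(D) ∩ k_L = k`, and by Artin's theorem `D` maps onto
`Gal(k_L/k)`, i.e. `DN = G`. Hence `Σ_{H ≤ D} |{τ̄ ∈ Pⁿ : ⟨σ̄'τ̄⟩ = H}| / |P|ⁿ` takes the same
value for `P = N` and `P = N₁`, and Möbius inversion over the finite lattice of subgroups of `G`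
gives the equality for `H = Gal(L/F)`.
-/

theorem eq_of_forall_finsum_mem_Iic_eq {α M : Type*} [PartialOrder α] [Finite α]
    [AddCancelCommMonoid M] {f g : α → M}
    (h : ∀ a, ∑ᶠ b ∈ Set.Iic a, f b = ∑ᶠ b ∈ Set.Iic a, g b) : f = g := by
  funext a
  induction a using WellFoundedLT.induction with
  | _ a ih =>
    have hlow : ∑ᶠ b ∈ Set.Iio a, f b = ∑ᶠ b ∈ Set.Iio a, g b :=
      finsum_mem_congr rfl fun b hb => ih b hb
    have hsum := h a
    rw [← Set.Iio_insert, finsum_mem_insert _ Set.self_notMem_Iio (Set.toFinite _),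
      finsum_mem_insert _ Set.self_notMem_Iio (Set.toFinite _), hlow] at hsum
    exact add_right_cancel hsum

namespace Subgroup

variable {G : Type*} [Group G]

theorem card_inf_mul_index_of_sup_eq_top [Finite G] {D P : Subgroup G} [P.Normal]
    (h : D ⊔ P = ⊤) : Nat.card ↥(D ⊓ P) * D.index = Nat.card P := by
  have hP : P.index = P.relIndex D := by rw [← relIndex_sup_right D P, h, relIndex_top_right]
  have hidx : (D ⊓ P).index = P.index * D.index := by
    rw [hP, ← inf_relIndex_left, relIndex_mul_index inf_le_left]
  refine Nat.eq_of_mul_eq_mul_right (Nat.pos_of_ne_zero (index_ne_zero_of_finite (H := P))) ?_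
  rw [card_mul_index, mul_assoc, mul_comm D.index, ← hidx, card_mul_index]

open scoped Pointwise in
theorem card_mul_mem_eq_card_inf {D P : Subgroup G} [P.Normal] {x : G} (hx : x ∈ D ⊔ P) :
    Nat.card {p : P // x * p ∈ D} = Nat.card ↥(D ⊓ P) := by
  obtain ⟨d, hd, p₀, hp₀, rfl⟩ : x ∈ (D : Set G) * P := by rw [← mul_normal]; exact hx
  refine Nat.card_congr
    { toFun := fun p => ⟨p₀ * p, mem_inf.mpr ⟨?_, P.mul_mem hp₀ p.1.2⟩⟩
      invFun := fun q => ⟨⟨p₀⁻¹ * q, P.mul_mem (P.inv_mem hp₀) (mem_inf.mp q.2).2⟩, ?_⟩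
      left_inv := fun p => by ext; simp
      right_inv := fun q => by ext; simp }
  · simpa [mul_assoc] using D.mul_mem (D.inv_mem hd) p.2
  · simpa [mul_assoc] using D.mul_mem hd (mem_inf.mp q.2).1

variable {n : ℕ} (σ : Fin n → G)

open scoped Classical in
theorem card_pi_mul_mem (D P : Subgroup G) [P.Normal] :
    Nat.card {τ : Fin n → P // ∀ i, σ i * τ i ∈ D} =
      if ∀ i, σ i ∈ D ⊔ P then Nat.card ↥(D ⊓ P) ^ n else 0 := by
  rw [Nat.card_congr (Equiv.subtypePiEquivPi (β := fun _ => ↥P) (p := fun i p => σ i * p ∈ D)),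
    Nat.card_pi]
  split_ifs with h
  · simp [card_mul_mem_eq_card_inf (h _)]
  · obtain ⟨i, hi⟩ := not_forall.mp h
    refine Finset.prod_eq_zero (Finset.mem_univ i) (Nat.card_eq_zero.mpr (Or.inl ⟨fun p => hi ?_⟩))
    simpa using mul_mem (mem_sup_left p.2) (mem_sup_right (inv_mem p.1.2))

theorem card_pi_mul_mem_eq_finsum [Finite G] (D P : Subgroup G) :
    Nat.card {τ : Fin n → P // ∀ i, σ i * τ i ∈ D} =
      ∑ᶠ H ∈ Set.Iic D,
        Nat.card {τ : Fin n → P // closure (Set.range fun i => σ i * τ i) = H} := by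
  have : Fintype (Set.Iic D) := Fintype.ofFinite _
  rw [← finsum_set_coe_eq_finsum_mem, finsum_eq_sum_of_fintype, ← Nat.card_sigma]
  refine Nat.card_congr (Equiv.sigmaSubtypeFiberEquivSubtype _ fun τ => ?_).symm
  simp [closure_le, Set.range_subset_iff]

theorem card_closure_mul_mul_card_pow_eq [Finite G] {N N₁ : Subgroup G} [N.Normal] [N₁.Normal]
    (hle : N ≤ N₁) (htop : ∀ H : Subgroup G, (∀ i, σ i ∈ H ⊔ N₁) → H ⊔ N = ⊤) (D : Subgroup G) :
    Nat.card {τ : Fin n → N₁ // closure (Set.range fun i => σ i * τ i) = D} * Nat.card N ^ n =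
      Nat.card {τ : Fin n → N // closure (Set.range fun i => σ i * τ i) = D} *
        Nat.card N₁ ^ n := by
  classical
  refine congrFun (eq_of_forall_finsum_mem_Iic_eq
    (f := fun H => Nat.card {τ : Fin n → N₁ // closure (Set.range fun i => σ i * τ i) = H} *
      Nat.card N ^ n)
    (g := fun H => Nat.card {τ : Fin n → N // closure (Set.range fun i => σ i * τ i) = H} *
      Nat.card N₁ ^ n) fun D => ?_) D
  rw [← finsum_mem_mul, ← finsum_mem_mul, ← card_pi_mul_mem_eq_finsum,
    ← card_pi_mul_mem_eq_finsum, card_pi_mul_mem, card_pi_mul_mem]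
  have hiff : (∀ i, σ i ∈ D ⊔ N₁) ↔ ∀ i, σ i ∈ D ⊔ N :=
    ⟨fun h i => htop D h ▸ mem_top (σ i), fun h i => sup_le_sup_left hle D (h i)⟩
  rw [if_congr hiff rfl rfl]
  split_ifs with h
  · have hN : D ⊔ N = ⊤ := htop D (hiff.mpr h)
    have hN₁ : D ⊔ N₁ = ⊤ := top_le_iff.mp (hN ▸ sup_le_sup_left hle D)
    rw [← mul_pow, ← mul_pow]
    congr 1
    refine Nat.eq_of_mul_eq_mul_right (Nat.pos_of_ne_zero (index_ne_zero_of_finite (H := D))) ?_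
    rw [mul_right_comm, card_inf_mul_index_of_sup_eq_top hN₁, mul_right_comm,
      card_inf_mul_index_of_sup_eq_top hN, mul_comm]
  · simp

end Subgroup

namespace IntermediateField

instance isScalarTower_of_tower {R K L : Type*} [CommSemiring R] [Field K] [Field L]
    [Algebra R K] [Algebra R L] [Algebra K L] [IsScalarTower R K L] (S : IntermediateField K L) :
    IsScalarTower R S L :=
  IsScalarTower.of_algebraMap_eq fun _ => rfl

section

variable {F E : Type*} [Field F] [Field E] [Algebra F E]

theorem mem_fixedField_zpowers_iff {φ : Gal(E/F)} {x : E} :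
    x ∈ fixedField (Subgroup.zpowers φ) ↔ φ x = x := by
  rw [mem_fixedField_iff]
  change Subgroup.zpowers φ ≤ MulAction.stabilizer Gal(E/F) x ↔ _
  rw [Subgroup.zpowers_le, MulAction.mem_stabilizer_iff, AlgEquiv.smul_def]

theorem mem_fixingSubgroup_adjoin_iff_s6 {S : Set E} {φ : Gal(E/F)} :
    φ ∈ (adjoin F S).fixingSubgroup ↔ ∀ x ∈ S, φ x = x := by
  rw [← Subgroup.zpowers_le, ← le_iff_le, adjoin_le_iff]
  exact forall₂_congr fun x _ => mem_fixedField_zpowers_iff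

theorem eq_top_of_fixedField_eq_bot {Γ : Subgroup Gal(E/F)} [Finite Γ]
    (h : fixedField Γ = ⊥) : Γ = ⊤ := by
  have : FiniteDimensional (fixedField Γ) E :=
    inferInstanceAs (FiniteDimensional (FixedPoints.subfield Γ E) E)
  rw [h] at this
  have : FiniteDimensional F E := FiniteDimensional.trans F (⊥ : IntermediateField F E) E
  rw [← fixingSubgroup_fixedField Γ, h, fixingSubgroup_bot]

theorem restrictScalars_fixedField_eq_iff {K M : IntermediateField F E} (hKM : K ≤ M)
    [FiniteDimensional K E] [IsGalois K E] (Γ : Subgroup Gal(E/K)) :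
    (fixedField Γ).restrictScalars F = M ↔ Γ = (extendScalars hKM).fixingSubgroup := by
  calc (fixedField Γ).restrictScalars F = M ↔ fixedField Γ = extendScalars hKM := by
        conv_rhs => rw [← (restrictScalars_injective F).eq_iff, extendScalars_restrictScalars]
    _ ↔ _ := IsGalois.fixedField_eq_iff_fixingSubgroup_eq.trans eq_comm

end

variable {F K E : Type*} [Field F] [Field K] [Field E] [Algebra F K] [Algebra F E]
  [Algebra K E] [IsScalarTower F K E] (M : IntermediateField F E)

theorem restrictScalars_fixedField_inf_eq_bot {n : ℕ} [IsGalois F M] {M₁ : IntermediateField F E}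
    (hM₁ : M₁ ≤ M) {σ : Fin n → Gal(E/K)} {ρ : Fin n → Gal(M/F)}
    (hρ : Subgroup.closure (Set.range ρ) = ⊤) (hσ : ∀ i (x : M), σ i x = ρ i x)
    {H : Subgroup Gal(E/K)} (hH : ∀ i, σ i ∈ H ⊔ (adjoin K (M₁ : Set E)).fixingSubgroup) :
    (fixedField H).restrictScalars F ⊓ M₁ = ⊥ := by
  refine eq_bot_iff.mpr fun x hx => ?_
  obtain ⟨hxH, hxM₁⟩ := mem_inf.mp hx
  have hHM₁ : H ⊔ (adjoin K (M₁ : Set E)).fixingSubgroup ≤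
      (fixedField H ⊓ adjoin K (M₁ : Set E)).fixingSubgroup :=
    sup_le ((le_iff_le _ _).mp inf_le_left) (fixingSubgroup_le inf_le_right)
  have hρx : ∀ i, ρ i ∈ MulAction.stabilizer Gal(M/F) (⟨x, hM₁ hxM₁⟩ : M) := fun i =>
    Subtype.ext <| (hσ i _).symm.trans <|
      (mem_fixingSubgroup_iff _ _).mp (hHM₁ (hH i)) x ⟨hxH, subset_adjoin K _ hxM₁⟩
  have hx_bot : (⟨x, hM₁ hxM₁⟩ : M) ∈ (⊥ : IntermediateField F M) :=
    (InfiniteGalois.mem_bot_iff_fixed _).mpr fun f =>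
      (Subgroup.closure_le _).mpr (Set.range_subset_iff.mpr hρx) (hρ ▸ Subgroup.mem_top f)
  obtain ⟨c, hc⟩ := mem_bot.mp hx_bot
  exact mem_bot.mpr ⟨c, congrArg Subtype.val hc⟩

section Normal

variable [Normal F M]

@[simp]
theorem coe_restrictRestrictAlgEquivMapHom_apply (φ : Gal(E/K)) (x : M) :
    (restrictRestrictAlgEquivMapHom F M K E φ x : E) = φ x := by
  simp [restrictRestrictAlgEquivMapHom, AlgEquiv.restrictNormalHom_apply]

theorem ker_restrictRestrictAlgEquivMapHom :
    (restrictRestrictAlgEquivMapHom F M K E).ker = (adjoin K (M : Set E)).fixingSubgroup := by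
  ext φ
  rw [MonoidHom.mem_ker, mem_fixingSubgroup_adjoin_iff_s6]
  simp [AlgEquiv.ext_iff, Subtype.ext_iff]

theorem normal_fixingSubgroup_adjoin : (adjoin K (M : Set E)).fixingSubgroup.Normal :=
  ker_restrictRestrictAlgEquivMapHom (K := K) M ▸ inferInstance

theorem fixedField_map_restrictRestrictAlgEquivMapHom_eq_bot {H : Subgroup Gal(E/K)}
    (h : (fixedField H).restrictScalars F ⊓ M = ⊥) :
    fixedField (H.map (restrictRestrictAlgEquivMapHom F M K E)) = ⊥ := by
  refine eq_bot_iff.mpr fun x hx => ?_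
  have hxH : (x : E) ∈ fixedField H := fun φ =>
    (coe_restrictRestrictAlgEquivMapHom_apply M φ.1 x).symm.trans
      (congrArg Subtype.val (hx ⟨_, φ, φ.2, rfl⟩))
  obtain ⟨c, hc⟩ := mem_bot.mp (h ▸ mem_inf.mpr ⟨hxH, x.2⟩ : (x : E) ∈ (⊥ : IntermediateField F E))
  exact mem_bot.mpr ⟨c, Subtype.ext hc⟩

theorem sup_fixingSubgroup_adjoin_eq_top [Finite Gal(E/K)] {H : Subgroup Gal(E/K)}
    (h : (fixedField H).restrictScalars F ⊓ M = ⊥) :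
    H ⊔ (adjoin K (M : Set E)).fixingSubgroup = ⊤ := by
  have : Finite (H.map (restrictRestrictAlgEquivMapHom F M K E)) :=
    Finite.Set.finite_image (H : Set Gal(E/K)) _
  rw [← ker_restrictRestrictAlgEquivMapHom, ← Subgroup.comap_map_eq,
    eq_top_of_fixedField_eq_bot (fixedField_map_restrictRestrictAlgEquivMapHom_eq_bot M h),
    Subgroup.comap_top]

end Normal

end IntermediateField

theorem statement6_general
    (k E L : Type) [Field k] [Field E] [Field L]
    [Algebra k E] [Algebra E L] [Algebra k L] [IsScalarTower k E L]
    [FiniteDimensional E L] [IsGalois E L]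
    [IsGalois k (separableClosure k L)]
    (n : ℕ)
    (ρ : Fin n → (↥(separableClosure k L) ≃ₐ[k] ↥(separableClosure k L)))
    (hgen : Subgroup.closure (Set.range ρ) = ⊤)
    (K : IntermediateField E L)
    (σ' : Fin n → (L ≃ₐ[K] L)) (hσ' : IsLift k E L n K ρ σ')
    (k₁ : IntermediateField k L) [IsGalois k k₁]
    (hk₁ : ∀ F : IntermediateField E L, K ≤ F →
      (F.restrictScalars k ⊓ separableClosure k L = ⊥ ↔ F.restrictScalars k ⊓ k₁ = ⊥))
    (F : IntermediateField E L) (hF : F ∈ SS k E L K) :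
    (Nat.card {τ : Fin n → ↥((compKL k E L K).fixingSubgroup) //
        FixT E L n K (fun i => σ' i * ((τ i : L ≃ₐ[K] L))) = F} : ℚ) /
      ((Module.finrank ↥(compKL k E L K) L : ℚ)) ^ n =
    (Nat.card {τ : Fin n → ↥((IntermediateField.adjoin K ((k₁ : IntermediateField k L) :
          Set L)).fixingSubgroup) //
        FixT E L n K (fun i => σ' i * ((τ i : L ≃ₐ[K] L))) = F} : ℚ) /
      ((Module.finrank ↥(IntermediateField.adjoin K ((k₁ : IntermediateField k L) :
          Set L)) L : ℚ)) ^ n := by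
  obtain ⟨hKF, -⟩ := hF
  have hk₁L : k₁ ≤ separableClosure k L := le_separableClosure k L k₁
  have : (compKL k E L K).fixingSubgroup.Normal :=
    normal_fixingSubgroup_adjoin _
  have : (adjoin K (k₁ : Set L)).fixingSubgroup.Normal :=
    normal_fixingSubgroup_adjoin _
  have htop : ∀ H, (∀ i, σ' i ∈ H ⊔ (adjoin K (k₁ : Set L)).fixingSubgroup) →
      H ⊔ (compKL k E L K).fixingSubgroup = ⊤ := by
    intro H hH
    have hKH : K ≤ (fixedField H).restrictScalars E := fun x hx =>
      (fixedField H).algebraMap_mem ⟨x, hx⟩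
    have hk₁H := restrictScalars_fixedField_inf_eq_bot (separableClosure k L) hk₁L hgen hσ' hH
    exact sup_fixingSubgroup_adjoin_eq_top _ ((hk₁ _ hKH).mpr hk₁H)
  have hcard := Subgroup.card_closure_mul_mul_card_pow_eq σ' (N := (compKL k E L K).fixingSubgroup)
    (fixingSubgroup_le (adjoin.mono _ _ _ hk₁L)) htop (extendScalars hKF).fixingSubgroup
  simp only [FixT, restrictScalars_fixedField_eq_iff hKF, ← IsGalois.card_fixingSubgroup_eq_finrank]
  rw [div_eq_div_iff (pow_ne_zero _ (by exact_mod_cast Nat.card_pos.ne'))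
    (pow_ne_zero _ (by exact_mod_cast Nat.card_pos.ne'))]
  exact_mod_cast hcard.symm

/-- if `k₁ ⊆ L` is a finite Galois extension of `k` such that, for
intermediate fields `F` with `K ⊆ F ⊆ L`, the conditions `F ∩ k_L = k` and `F ∩ k₁ = k`
are equivalent, then `μ¹_{L/K}` computed with respect to `k₁` or to `k_L` gives the same
result. -/
theorem statement6
    (k E L : Type) [Field k] [Field E] [Field L] [PerfectField k]
    [Algebra k E] [Algebra E L] [Algebra k L] [IsScalarTower k E L]
    (hreg : IsRegularExtension k E)
    [FiniteDimensional E L] [IsGalois E L]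
    [IsGalois k (separableClosure k L)]
    (n : ℕ) (hn : 1 ≤ n)
    (ρ : Fin n → (↥(separableClosure k L) ≃ₐ[k] ↥(separableClosure k L)))
    (hgen : Subgroup.closure (Set.range ρ) = ⊤)
    (K : IntermediateField E L)
    (hK : K.restrictScalars k ⊓ separableClosure k L = ⊥)
    (σ' : Fin n → (L ≃ₐ[K] L)) (hσ' : IsLift k E L n K ρ σ')
    (k₁ : IntermediateField k L) [IsGalois k k₁] [FiniteDimensional k k₁]
    (hk₁ : ∀ F : IntermediateField E L, K ≤ F →
      (F.restrictScalars k ⊓ separableClosure k L = ⊥ ↔ F.restrictScalars k ⊓ k₁ = ⊥))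
    (F : IntermediateField E L) (hF : F ∈ SS k E L K) :
    (Nat.card {τ : Fin n → ↥((compKL k E L K).fixingSubgroup) //
        FixT E L n K (fun i => σ' i * ((τ i : L ≃ₐ[K] L))) = F} : ℚ) /
      ((Module.finrank ↥(compKL k E L K) L : ℚ)) ^ n =
    (Nat.card {τ : Fin n → ↥((IntermediateField.adjoin K ((k₁ : IntermediateField k L) :
          Set L)).fixingSubgroup) //
        FixT E L n K (fun i => σ' i * ((τ i : L ≃ₐ[K] L))) = F} : ℚ) /
      ((Module.finrank ↥(IntermediateField.adjoin K ((k₁ : IntermediateField k L) :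
          Set L)) L : ℚ)) ^ n :=
  statement6_general k E L n ρ hgen K σ' hσ' k₁ hk₁ F hF
end

section
/- In the measure setting, let K be an intermediate field with E ⊆ K ⊆ L and K ∩ k_L = k, and suppose F ∈ 𝒮(L/K) is maximal with respect to inclusion in 𝒮(L/K). Then: (i) every tuple ᾱ = (α_1,…,α_n) ∈ Gal(L/F)^n whose restriction to k_L equals ρ̄ generates the group Gal(L/F); and (ii) μ¹_{L/K}({F}) > 0. -/
/-! Restricting to `k_L` maps `Gal(L/K)` onto `Gal(k_L/k)` as soon as `K ∩ k_L = k`: the image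
is a finite group of automorphisms of `k_L` whose fixed field is `k`, so by Artin's theorem it is
everything. On the other hand, since `k_L/k` is Galois and `ρ̄` generates `Gal(k_L/k)`, the fixed
field of any tuple lifting `ρ̄` meets `k_L` only in `k`, hence lies in `𝒮`.

For (i), `Fix(ᾱ)` therefore lies in `𝒮(L/K)` and contains `F`, so it is `F` by maximality, and the
Galois correspondence for `L/F` says that `ᾱ` generates `Gal(L/F)`. For (ii), lift `ρ̄` to `γ̄` in
`Gal(L/F) ⊆ Gal(L/K)`; again `Fix(γ̄) = F` by maximality, and `γ̄ = σ̄'τ̄` with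
`τ̄ = σ̄'⁻¹γ̄ ∈ Gal(L/K·k_L)ⁿ`, so the count defining `μ¹_{L/K}({F})` is nonzero. -/

open IntermediateField

section

variable {E L : Type} [Field E] [Field L] [Algebra E L] {n : ℕ}

theorem mem_fixingSubgroup_adjoin_iff {K : IntermediateField E L} {S : Set L} (g : L ≃ₐ[K] L) :
    g ∈ (adjoin K S).fixingSubgroup ↔ ∀ x ∈ S, g x = x := by
  refine ⟨fun hg x hx => hg ⟨x, subset_adjoin K S hx⟩, fun hS => ?_⟩
  rw [IntermediateField.mem_fixingSubgroup_iff]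
  intro x hx
  induction hx using adjoin_induction with
  | mem x hx => exact hS x hx
  | algebraMap x => exact g.commutes x
  | add x y _ _ hx hy => rw [map_add, hx, hy]
  | inv x _ hx => rw [map_inv₀, hx]
  | mul x y _ _ hx hy => rw [map_mul, hx, hy]

def galOfLE {K F : IntermediateField E L} (h : K ≤ F) (σ : L ≃ₐ[F] L) : L ≃ₐ[K] L :=
  AlgEquiv.ofRingEquiv (f := σ.toRingEquiv) fun z => σ.commutes ⟨z, h z.2⟩

theorem mem_fixT_iff (K : IntermediateField E L) (σ : Fin n → (L ≃ₐ[K] L)) (x : L) :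
    x ∈ FixT E L n K σ ↔ ∀ i, σ i x = x := by
  refine ⟨fun hx i => hx ⟨σ i, Subgroup.subset_closure ⟨i, rfl⟩⟩, fun hx g => ?_⟩
  have : Subgroup.closure (Set.range σ) ≤ MulAction.stabilizer (L ≃ₐ[K] L) x :=
    (Subgroup.closure_le _).2 (Set.range_subset_iff.2 hx)
  exact this g.2

theorem le_fixT (K : IntermediateField E L) (σ : Fin n → (L ≃ₐ[K] L)) : K ≤ FixT E L n K σ :=
  fun x hx => (mem_fixT_iff K σ x).2 fun i => (σ i).commutes ⟨x, hx⟩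

theorem closure_range_eq_top_of_fixT_le [FiniteDimensional E L] [IsGalois E L]
    {K : IntermediateField E L} {σ : Fin n → (L ≃ₐ[K] L)} (h : FixT E L n K σ ≤ K) :
    Subgroup.closure (Set.range σ) = ⊤ := by
  have hbot : fixedField (Subgroup.closure (Set.range σ)) = ⊥ :=
    restrictScalars_injective E <|
      (h.antisymm (le_fixT K σ)).trans (restrictScalars_bot_eq_self K).symm
  rw [← fixingSubgroup_fixedField (Subgroup.closure (Set.range σ)), hbot, fixingSubgroup_bot]

end

section

variable (k : Type) {E L : Type} [Field k] [Field E] [Field L] [Algebra E L] [Algebra k L]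
  {n : ℕ}

theorem inv_mul_mem_fixingSubgroup_compKL {K : IntermediateField E L} {σ γ : L ≃ₐ[K] L}
    (h : ∀ x ∈ separableClosure k L, σ x = γ x) :
    σ⁻¹ * γ ∈ (compKL k E L K).fixingSubgroup :=
  (mem_fixingSubgroup_adjoin_iff _).2 fun x hx => (σ.symm_apply_eq).2 (h x hx).symm

theorem mu1Lift_pos {K : IntermediateField E L} [FiniteDimensional K L]
    {ρ : Fin n → (separableClosure k L ≃ₐ[k] separableClosure k L)} {σ' γ : Fin n → (L ≃ₐ[K] L)}
    (hσ' : IsLift k E L n K ρ σ') (hγ : IsLift k E L n K ρ γ)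
    {X : Set (IntermediateField E L)} (hX : FixT E L n K γ ∈ X) :
    0 < mu1Lift k E L n K σ' X := by
  let τ : Fin n → (compKL k E L K).fixingSubgroup := fun i =>
    ⟨(σ' i)⁻¹ * γ i, inv_mul_mem_fixingSubgroup_compKL k fun x hx =>
      (hσ' i ⟨x, hx⟩).trans (hγ i ⟨x, hx⟩).symm⟩
  have hστ : (fun i => σ' i * (τ i : L ≃ₐ[K] L)) = γ := funext fun i => mul_inv_cancel_left _ _
  have : Nonempty {τ : Fin n → (compKL k E L K).fixingSubgroup //
      FixT E L n K (fun i => σ' i * (τ i : L ≃ₐ[K] L)) ∈ X} := ⟨τ, hστ ▸ hX⟩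
  exact div_pos (Nat.cast_pos.2 Nat.card_pos) (pow_pos (Nat.cast_pos.2 Module.finrank_pos) n)

variable [Algebra k E] [IsScalarTower k E L]

instance IntermediateField.isScalarTower_base (K : IntermediateField E L) :
    IsScalarTower k K L :=
  IsScalarTower.of_algebraMap_eq' rfl

theorem mem_range_algebraMap_of_forall_fixed [FiniteDimensional E L] [IsGalois E L]
    {K : IntermediateField E L} (hK : K.restrictScalars k ⊓ separableClosure k L = ⊥) {y : L}
    (hy : y ∈ separableClosure k L) (hfix : ∀ σ : L ≃ₐ[K] L, σ y = y) :
    y ∈ Set.range (algebraMap k L) := by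
  obtain ⟨z, rfl⟩ := (IsGalois.mem_range_algebraMap_iff_fixed (F := K) y).2 hfix
  have hz : (z : L) ∈ K.restrictScalars k ⊓ separableClosure k L := ⟨z.2, hy⟩
  rwa [hK, mem_bot] at hz

variable [IsGalois k (separableClosure k L)]

noncomputable def galRestrictSepClosure (K : IntermediateField E L) :
    (L ≃ₐ[K] L) →* (separableClosure k L ≃ₐ[k] separableClosure k L) :=
  (AlgEquiv.restrictNormalHom (separableClosure k L)).comp (AlgEquiv.restrictScalarsHom k)

theorem galRestrictSepClosure_apply_coe (K : IntermediateField E L) (σ : L ≃ₐ[K] L)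
    (x : separableClosure k L) : (galRestrictSepClosure k K σ x : L) = σ x :=
  AlgEquiv.restrictNormalHom_apply _ (σ.restrictScalars k) x

theorem galRestrictSepClosure_surjective [FiniteDimensional E L] [IsGalois E L]
    {K : IntermediateField E L} (hK : K.restrictScalars k ⊓ separableClosure k L = ⊥) :
    Function.Surjective (galRestrictSepClosure k K) := by
  intro ρ₀
  set H := (galRestrictSepClosure k K).range
  have : Finite H := Finite.of_surjective _ (galRestrictSepClosure k K).rangeRestrict_surjective
  have hfixed : ∀ x ∈ FixedPoints.subfield H (separableClosure k L),
      x ∈ Set.range (algebraMap k (separableClosure k L)) := by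
    intro x hx
    obtain ⟨c, hc⟩ := mem_range_algebraMap_of_forall_fixed k hK x.2 fun σ => by
      rw [← galRestrictSepClosure_apply_coe]
      exact congrArg Subtype.val (hx ⟨_, σ, rfl⟩)
    exact ⟨c, Subtype.ext hc⟩
  let ρ₁ : separableClosure k L ≃ₐ[FixedPoints.subfield H (separableClosure k L)]
      separableClosure k L :=
    AlgEquiv.ofRingEquiv (f := ρ₀.toRingEquiv) fun x => by
      obtain ⟨c, hc⟩ := hfixed x x.2
      show ρ₀ x = x
      rw [← hc, AlgEquiv.commutes]
  obtain ⟨⟨_, σ, rfl⟩, hσ⟩ := FixedPoints.toAlgAut_surjective H (separableClosure k L) ρ₁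
  exact ⟨σ, AlgEquiv.ext fun x => AlgEquiv.ext_iff.mp hσ x⟩

variable {ρ : Fin n → (separableClosure k L ≃ₐ[k] separableClosure k L)}

theorem fixT_inf_separableClosure_eq_bot (hgen : Subgroup.closure (Set.range ρ) = ⊤)
    {K : IntermediateField E L} {σ : Fin n → (L ≃ₐ[K] L)} (hσ : IsLift k E L n K ρ σ) :
    (FixT E L n K σ).restrictScalars k ⊓ separableClosure k L = ⊥ := by
  refine eq_bot_iff.2 fun x ⟨hxfix, hxsep⟩ => mem_bot.2 ?_
  have hρ : ∀ i, ρ i ⟨x, hxsep⟩ = ⟨x, hxsep⟩ := fun i =>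
    Subtype.ext <| (hσ i ⟨x, hxsep⟩).symm.trans ((mem_fixT_iff K σ x).1 hxfix i)
  have hstab : (⊤ : Subgroup _) ≤ MulAction.stabilizer _ (⟨x, hxsep⟩ : separableClosure k L) :=
    hgen ▸ (Subgroup.closure_le _).2 (Set.range_subset_iff.2 hρ)
  obtain ⟨c, hc⟩ :=
    (InfiniteGalois.mem_range_algebraMap_iff_fixed _).2 fun g => hstab (Subgroup.mem_top g)
  exact ⟨c, congrArg Subtype.val hc⟩

theorem fixT_mem_SS (hgen : Subgroup.closure (Set.range ρ) = ⊤) {K F : IntermediateField E L}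
    (hKF : K ≤ F) {α : Fin n → (L ≃ₐ[F] L)} (hα : IsLift k E L n F ρ α) :
    FixT E L n F α ∈ SS k E L K :=
  ⟨hKF.trans (le_fixT F α), fixT_inf_separableClosure_eq_bot k hgen hα⟩

end

theorem statement7_general
    (k E L : Type) [Field k] [Field E] [Field L]
    [Algebra k E] [Algebra E L] [Algebra k L] [IsScalarTower k E L]
    [FiniteDimensional E L] [IsGalois E L]
    [IsGalois k (separableClosure k L)]
    (n : ℕ)
    (ρ : Fin n → (↥(separableClosure k L) ≃ₐ[k] ↥(separableClosure k L)))
    (hgen : Subgroup.closure (Set.range ρ) = ⊤)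
    (K : IntermediateField E L)
    (F : IntermediateField E L) (hF : F ∈ SS k E L K)
    (hmax : ∀ F' ∈ SS k E L K, F ≤ F' → F' = F) :
    (∀ α : Fin n → (L ≃ₐ[F] L), IsLift k E L n F ρ α →
        Subgroup.closure (Set.range α) = (⊤ : Subgroup (L ≃ₐ[F] L))) ∧
    (∀ σ' : Fin n → (L ≃ₐ[K] L), IsLift k E L n K ρ σ' →
        0 < mu1Lift k E L n K σ' {F}) := by
  refine ⟨fun α hα => closure_range_eq_top_of_fixT_le ?_, fun σ' hσ' => ?_⟩
  · exact (hmax _ (fixT_mem_SS k hgen hF.1 hα) (le_fixT F α)).le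
  · choose β hβ using fun i => galRestrictSepClosure_surjective k hF.2 (ρ i)
    let γ : Fin n → (L ≃ₐ[K] L) := fun i => galOfLE hF.1 (β i)
    have hγ : IsLift k E L n K ρ γ := fun i x => by
      rw [← hβ i, galRestrictSepClosure_apply_coe]
      rfl
    have hFγ : F ≤ FixT E L n K γ := fun x hx =>
      (mem_fixT_iff K γ x).2 fun i => (β i).commutes ⟨x, hx⟩
    exact mu1Lift_pos k hσ' hγ (hmax _ (fixT_mem_SS k hgen le_rfl hγ) hFγ)

/-- if `F ∈ 𝒮(L/K)` is maximal with respect to inclusion, then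
(i) every tuple `ᾱ ∈ Gal(L/F)ⁿ` restricting to `ρ̄` on `k_L` generates `Gal(L/F)`, and
(ii) `μ¹_{L/K}({F}) > 0` (for any lift `σ̄'` of `ρ̄` to `Gal(L/K)`). -/
theorem statement7
    (k E L : Type) [Field k] [Field E] [Field L] [PerfectField k]
    [Algebra k E] [Algebra E L] [Algebra k L] [IsScalarTower k E L]
    (hreg : IsRegularExtension k E)
    [FiniteDimensional E L] [IsGalois E L]
    [IsGalois k (separableClosure k L)]
    (n : ℕ) (hn : 1 ≤ n)
    (ρ : Fin n → (↥(separableClosure k L) ≃ₐ[k] ↥(separableClosure k L)))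
    (hgen : Subgroup.closure (Set.range ρ) = ⊤)
    (K : IntermediateField E L)
    (hK : K.restrictScalars k ⊓ separableClosure k L = ⊥)
    (F : IntermediateField E L) (hF : F ∈ SS k E L K)
    (hmax : ∀ F' ∈ SS k E L K, F ≤ F' → F' = F) :
    (∀ α : Fin n → (L ≃ₐ[F] L), IsLift k E L n F ρ α →
        Subgroup.closure (Set.range α) = (⊤ : Subgroup (L ≃ₐ[F] L))) ∧
    (∀ σ' : Fin n → (L ≃ₐ[K] L), IsLift k E L n K ρ σ' →
        0 < mu1Lift k E L n K σ' {F}) :=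
  statement7_general k E L n ρ hgen K F hF hmax
end

section
/- In the measure setting, let K be an intermediate field with E ⊆ K ⊆ L and K ∩ k_L = k. Let G̃ be a profinite group together with a continuous surjective homomorphism φ̃: G̃ → Gal(k_L/k) such that φ̃ is a Frattini cover and G̃ is projective (these two conditions characterize G̃ as the universal Frattini cover of Gal(k_L/k)). Then for F ∈ 𝒮(L/K), the field F is maximal with respect to inclusion in 𝒮(L/K) if and only if there exists a continuous surjective homomorphism from G̃ onto the finite group Gal(L/F). -/
open IntermediateField

/-- A topological (profinite) group `G` is projective: every continuous epimorphism
`α : G → A` to a finite group and epimorphism `β : B → A` of finite groups admit a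
continuous homomorphism `γ : G → B` with `β ∘ γ = α`. -/
def IsProjectiveProfiniteGroup (G : Type*) [Group G] [TopologicalSpace G] : Prop :=
  ∀ (A B : Type) [Group A] [Group B] [Finite A] [Finite B]
    [TopologicalSpace A] [DiscreteTopology A] [TopologicalSpace B] [DiscreteTopology B]
    (α : G →* A) (β : B →* A),
    Continuous α → Function.Surjective α → Function.Surjective β →
      ∃ γ : G →* B, Continuous γ ∧ β.comp γ = α

/-!
Restriction `r : Gal(L/F) → Gal(k_L/k)` is onto because `F ∩ k_L = k`, and by Galois theory
the fields `F' ⊇ F` in `𝒮(L/K)` are the fixed fields of the subgroups of `Gal(L/F)` that `r`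
maps onto `Gal(k_L/k)`; so `F` is maximal iff `r` is a Frattini cover. If it is, projectivity
of `G̃` lifts `φ̃` through `r`, and the image of the lift maps onto `Gal(k_L/k)`, hence is
everything. Conversely, for a continuous epimorphism `ψ : G̃ → Gal(L/F)` the Frattini property
of `φ̃` forces `ψ(ker φ̃) ≤ Φ(Gal(L/F))`, so `Gal(L/F)/Φ` is a quotient of `Gal(k_L/k)`.
Composing with `r` gives an epimorphism `Gal(L/F) → Gal(L/F)/Φ`, whose kernel must be `Φ`
(it contains `Φ`, as `Φ` of the quotient is trivial, and has the same order); thus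
`ker r ≤ Φ` and `r` is a Frattini cover.
-/

open Subgroup

section FrattiniCover

variable {G A B : Type*} [Group G] [Group A] [Group B]

-- Surjectivity, part of the usual notion of a Frattini cover, is assumed separately.
def MonoidHom.IsFrattiniCover [TopologicalSpace G] (f : G →* A) : Prop :=
  ∀ H : Subgroup G, IsClosed (H : Set G) → H.map f = ⊤ → H = ⊤

lemma le_frattini_iff {H : Subgroup B} :
    H ≤ frattini B ↔ ∀ M : Subgroup B, IsCoatom M → H ≤ M := by
  simp [frattini, Order.radical]

lemma Subgroup.isCoatom_map_of_ker_le {f : B →* A} (hf : Function.Surjective f)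
    {M : Subgroup B} (hker : f.ker ≤ M) (hM : IsCoatom M) : IsCoatom (M.map f) := by
  have hcomap : (M.map f).comap f = M := comap_map_eq_self hker
  refine ⟨fun htop => hM.1 (by rw [← hcomap, htop, comap_top]), fun H hH => ?_⟩
  rw [← comap_lt_comap_of_surjective hf, hcomap] at hH
  rw [← (comap_injective hf).eq_iff, hM.2 _ hH, comap_top]

lemma frattini_quotient_frattini_eq_bot : frattini (B ⧸ frattini B) = ⊥ := by
  set π := QuotientGroup.mk' (frattini B)
  have hπ : Function.Surjective π := QuotientGroup.mk'_surjective _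
  rw [eq_bot_iff, ← comap_le_comap_of_surjective hπ, MonoidHom.comap_bot,
    QuotientGroup.ker_mk', le_frattini_iff]
  intro M hM
  have hker : π.ker ≤ M := (QuotientGroup.ker_mk' _).trans_le (frattini_le_coatom hM)
  calc (frattini (B ⧸ frattini B)).comap π ≤ (M.map π).comap π :=
        comap_mono (frattini_le_coatom (isCoatom_map_of_ker_le hπ hker hM))
    _ = M := comap_map_eq_self hker

lemma MonoidHom.ker_eq_frattini_of_surjective [Finite B] (e : B →* B ⧸ frattini B)
    (he : Function.Surjective e) : e.ker = frattini B := by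
  have hle : frattini B ≤ e.ker := by
    simpa [frattini_quotient_frattini_eq_bot] using frattini_le_comap_frattini_of_surjective he
  have hindex : e.ker.index = (frattini B).index := by
    rw [index_ker, MonoidHom.range_eq_top.2 he, card_top, index]
  have hcard : Nat.card e.ker = Nat.card (frattini B) :=
    Nat.eq_of_mul_eq_mul_right (Nat.pos_of_ne_zero (frattini B).index_ne_zero_of_finite)
      (by rw [card_mul_index, ← hindex, card_mul_index])
  exact (eq_of_le_of_card_ge hle hcard.le).symm

lemma MonoidHom.ker_le_frattini_of_surjective_comp [Finite B] (r : B →* A)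
    (q : A →* B ⧸ frattini B) (h : Function.Surjective (q.comp r)) : r.ker ≤ frattini B :=
  calc r.ker ≤ q.ker.comap r := ker_le_comap r _
    _ = frattini B := by rw [comap_ker, (q.comp r).ker_eq_frattini_of_surjective h]

lemma MonoidHom.isFrattiniCover_of_ker_le_frattini [TopologicalSpace B] [Finite B]
    {r : B →* A} (h : r.ker ≤ frattini B) : r.IsFrattiniCover := by
  intro H _ hH
  apply frattini_nongenerating
  have hsup : H ⊔ r.ker = ⊤ := by rw [← comap_map_eq, hH, comap_top]
  exact top_le_iff.mp (hsup ▸ sup_le_sup_left h H)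

variable [TopologicalSpace G]

/-- Every maximal subgroup of `B` pulls back along `ψ` to a maximal open subgroup of `G`;
this subgroup contains `ker φ`, since otherwise it would map onto `A`. -/
lemma MonoidHom.ker_le_comap_frattini [TopologicalSpace B] [DiscreteTopology B]
    {φ : G →* A} (hφs : Function.Surjective φ) (hφ : φ.IsFrattiniCover)
    {ψ : G →* B} (hψc : Continuous ψ) (hψs : Function.Surjective ψ) :
    φ.ker ≤ (frattini B).comap ψ := by
  simp_rw [frattini, Order.radical, comap_iInf, le_iInf_iff]
  intro M hM
  have hN := isCoatom_comap_of_surjective hψs hM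
  by_contra hnot
  have hsup : M.comap ψ ⊔ φ.ker = ⊤ := hN.2 _ (left_lt_sup.2 hnot)
  refine hN.1 (hφ _ ((isClosed_discrete _).preimage hψc) ?_)
  exact comap_injective hφs (by rw [comap_map_eq, hsup, comap_top])

lemma MonoidHom.isFrattiniCover_of_continuous_surjective [Finite B] [TopologicalSpace B]
    [DiscreteTopology B] {φ : G →* A} (hφs : Function.Surjective φ) (hφ : φ.IsFrattiniCover)
    {r : B →* A} (hrs : Function.Surjective r) {ψ : G →* B} (hψc : Continuous ψ)
    (hψs : Function.Surjective ψ) : r.IsFrattiniCover := by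
  set π := QuotientGroup.mk' (frattini B)
  have hker : φ.ker ≤ (π.comp ψ).ker := by
    simpa [π, ← comap_ker] using φ.ker_le_comap_frattini hφs hφ hψc hψs
  set q : A →* B ⧸ frattini B :=
    φ.liftOfRightInverse _ (Function.rightInverse_surjInv hφs) ⟨π.comp ψ, hker⟩
  have hq : q.comp φ = π.comp ψ := φ.liftOfRightInverse_comp _ _ _
  have hqs : Function.Surjective q := Function.Surjective.of_comp (g := φ) <| by
    rw [← MonoidHom.coe_comp, hq]
    exact (QuotientGroup.mk'_surjective _).comp hψs
  exact isFrattiniCover_of_ker_le_frattini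
    (r.ker_le_frattini_of_surjective_comp q (hqs.comp hrs))

lemma IsProjectiveProfiniteGroup.exists_continuous_surjective {G A B : Type} [Group G]
    [TopologicalSpace G] [Group A] [Group B] [Finite A] [Finite B] [TopologicalSpace A]
    [DiscreteTopology A] [TopologicalSpace B] [DiscreteTopology B]
    (hG : IsProjectiveProfiniteGroup G) {φ : G →* A} (hφc : Continuous φ)
    (hφs : Function.Surjective φ) {r : B →* A} (hrs : Function.Surjective r)
    (hr : r.IsFrattiniCover) : ∃ ψ : G →* B, Continuous ψ ∧ Function.Surjective ψ := by
  obtain ⟨γ, hγc, hγ⟩ := hG A B φ r hφc hφs hrs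
  refine ⟨γ, hγc, MonoidHom.range_eq_top.1 (hr _ (isClosed_discrete _) ?_)⟩
  rw [← MonoidHom.range_comp, hγ, MonoidHom.range_eq_top.2 hφs]

end FrattiniCover

section SeparableClosureRestriction

open IntermediateField

lemma IntermediateField.fixedField_eq_bot_iff {F E : Type*} [Field F] [Field E] [Algebra F E]
    [IsGalois F E] [FiniteDimensional F E] {H : Subgroup Gal(E/F)} :
    fixedField H = ⊥ ↔ H = ⊤ :=
  ⟨fun h => by rw [← fixingSubgroup_fixedField H, h, fixingSubgroup_bot],
    fun h => h ▸ IsGalois.fixedField_top⟩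

variable {k E L : Type} [Field k] [Field E] [Field L]
  [Algebra k E] [Algebra E L] [Algebra k L] [IsScalarTower k E L]
  [IsGalois k (separableClosure k L)]

variable (k) in
noncomputable def restrictSeparableClosure (F : IntermediateField E L) :
    Gal(L/F) →* Gal(separableClosure k L/k) :=
  (AlgEquiv.restrictNormalHom (separableClosure k L)).comp
    { toFun := fun σ => (σ.restrictScalars E).restrictScalars k
      map_one' := rfl
      map_mul' := fun _ _ => rfl }

lemma restrictSeparableClosure_apply (F : IntermediateField E L) (σ : Gal(L/F))
    (x : separableClosure k L) : (restrictSeparableClosure k F σ x : L) = σ x :=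
  AlgEquiv.restrictNormalHom_apply _ _ x

lemma mem_fixedField_map_restrictSeparableClosure_iff {F : IntermediateField E L}
    (H : Subgroup Gal(L/F)) (x : separableClosure k L) :
    x ∈ fixedField (H.map (restrictSeparableClosure k F)) ↔ (x : L) ∈ fixedField H := by
  simp only [mem_fixedField_iff, Subgroup.mem_map, forall_exists_index, and_imp,
    forall_apply_eq_imp_iff₂, Subtype.ext_iff, restrictSeparableClosure_apply]

variable [FiniteDimensional k (separableClosure k L)]

lemma map_restrictSeparableClosure_eq_top_iff {F : IntermediateField E L}
    (H : Subgroup Gal(L/F)) :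
    H.map (restrictSeparableClosure k F) = ⊤ ↔
      ((fixedField H).restrictScalars E).restrictScalars k ⊓ separableClosure k L = ⊥ := by
  rw [← fixedField_eq_bot_iff, eq_bot_iff, eq_bot_iff]
  constructor
  · rintro h x ⟨hxH, hxs⟩
    obtain ⟨c, hc⟩ := mem_bot.1
      (h ((mem_fixedField_map_restrictSeparableClosure_iff H ⟨x, hxs⟩).2 hxH))
    exact mem_bot.2 ⟨c, congrArg Subtype.val hc⟩
  · intro h x hx
    obtain ⟨c, hc⟩ := mem_bot.1
      (h ⟨(mem_fixedField_map_restrictSeparableClosure_iff H x).1 hx, x.2⟩)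
    exact mem_bot.2 ⟨c, Subtype.ext hc⟩

variable [FiniteDimensional E L] [IsGalois E L]

lemma restrictSeparableClosure_surjective {F : IntermediateField E L}
    (hF : F.restrictScalars k ⊓ separableClosure k L = ⊥) :
    Function.Surjective (restrictSeparableClosure k F) := by
  rw [← MonoidHom.range_eq_top, MonoidHom.range_eq_map, map_restrictSeparableClosure_eq_top_iff]
  rwa [IsGalois.fixedField_top, restrictScalars_bot_eq_self]

theorem maximal_mem_SS_iff_isFrattiniCover {K F : IntermediateField E L}
    (hF : F ∈ SS k E L K) :
    (∀ F' ∈ SS k E L K, F ≤ F' → F' = F) ↔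
      (restrictSeparableClosure k F).IsFrattiniCover := by
  constructor
  · intro hmax H _ hH
    have hFH : F ≤ (fixedField H).restrictScalars E := fun x hx =>
      (fixedField H).algebraMap_mem ⟨x, hx⟩
    have hH' := hmax _ ⟨hF.1.trans hFH, (map_restrictSeparableClosure_eq_top_iff H).1 hH⟩ hFH
    rw [← fixedField_eq_bot_iff]
    apply restrictScalars_injective E
    rw [hH', restrictScalars_bot_eq_self]
  · intro hr F' hF' hle
    have hX : fixedField (extendScalars hle).fixingSubgroup = extendScalars hle :=
      IsGalois.fixedField_fixingSubgroup _
    have htop : (extendScalars hle).fixingSubgroup = ⊤ := hr _ (isClosed_discrete _)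
      ((map_restrictSeparableClosure_eq_top_iff _).2 (by rw [hX]; exact hF'.2))
    rw [← extendScalars_restrictScalars hle, ← hX, htop, IsGalois.fixedField_top,
      restrictScalars_bot_eq_self]

end SeparableClosureRestriction

theorem statement8_general
    (k E L : Type) [Field k] [Field E] [Field L]
    [Algebra k E] [Algebra E L] [Algebra k L] [IsScalarTower k E L]
    [FiniteDimensional E L] [IsGalois E L]
    [IsGalois k (separableClosure k L)]
    [FiniteDimensional k (separableClosure k L)]
    (K : IntermediateField E L)
    (G' : Type) [Group G'] [TopologicalSpace G']
    (φ : G' →* (↥(separableClosure k L) ≃ₐ[k] ↥(separableClosure k L)))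
    (hcont : Continuous φ) (hsurj : Function.Surjective φ)
    (hfrattini : ∀ H₀ : Subgroup G', IsClosed (H₀ : Set G') →
      Subgroup.map φ H₀ = ⊤ → H₀ = ⊤)
    (hproj : IsProjectiveProfiniteGroup G')
    (F : IntermediateField E L) (hF : F ∈ SS k E L K) :
    (∀ F' ∈ SS k E L K, F ≤ F' → F' = F) ↔
      ∃ ψ : G' →* (L ≃ₐ[F] L), Continuous ψ ∧ Function.Surjective ψ := by
  have hres := restrictSeparableClosure_surjective hF.2
  rw [maximal_mem_SS_iff_isFrattiniCover hF]
  exact ⟨hproj.exists_continuous_surjective hcont hsurj hres,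
    fun ⟨_, hψc, hψs⟩ =>
      MonoidHom.isFrattiniCover_of_continuous_surjective hsurj hfrattini hres hψc hψs⟩

/-- let `G̃` be a profinite group with a continuous surjection
`φ̃ : G̃ → Gal(k_L/k)` which is a Frattini cover, and suppose `G̃` is projective
(so `G̃` is the universal Frattini cover of `Gal(k_L/k)`). Then `F ∈ 𝒮(L/K)` is maximal
with respect to inclusion if and only if there is a continuous surjective homomorphism
from `G̃` onto `Gal(L/F)`. -/
theorem statement8
    (k E L : Type) [Field k] [Field E] [Field L] [PerfectField k]
    [Algebra k E] [Algebra E L] [Algebra k L] [IsScalarTower k E L]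
    (hreg : IsRegularExtension k E)
    [FiniteDimensional E L] [IsGalois E L]
    [IsGalois k (separableClosure k L)]
    [FiniteDimensional k (separableClosure k L)]
    (K : IntermediateField E L)
    (hK : K.restrictScalars k ⊓ separableClosure k L = ⊥)
    (G' : Type) [Group G'] [TopologicalSpace G'] [IsTopologicalGroup G']
    [CompactSpace G'] [T2Space G'] [TotallyDisconnectedSpace G']
    (φ : G' →* (↥(separableClosure k L) ≃ₐ[k] ↥(separableClosure k L)))
    (hcont : Continuous φ) (hsurj : Function.Surjective φ)
    (hfrattini : ∀ H₀ : Subgroup G', IsClosed (H₀ : Set G') →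
      Subgroup.map φ H₀ = ⊤ → H₀ = ⊤)
    (hproj : IsProjectiveProfiniteGroup G')
    (F : IntermediateField E L) (hF : F ∈ SS k E L K) :
    (∀ F' ∈ SS k E L K, F ≤ F' → F' = F) ↔
      ∃ ψ : G' →* (L ≃ₐ[F] L), Continuous ψ ∧ Function.Surjective ψ :=
  statement8_general k E L K G' φ hcont hsurj hfrattini hproj F hF
end
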